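/- The four-qubit state |Ψ⟩ = ((a+d)/2)(|0000⟩+|1111⟩) + ((a-d)/2)(|0011⟩+|1100⟩) + ((b+c)/2)(|0101⟩+|1010⟩) + ((b-c)/2)(|0110⟩+|1001⟩) is fully entangled (each single-qubit reduced density matrix has rank 2) whenever a,b,c,d satisfy b²≠c², c²≠d², b²≠d², and a²∉{b²,c²,d²}. -/
import Mathlib


open Matrix

/-- The matrix `M 0 ⊗ M 1 ⊗ ⋯ ⊗ M (n-1)` acting on `n` qubits,
indexed by bit strings `Fin n → Fin 2`. -/
def localMat {n : ℕ} (M : Fin n → Matrix (Fin 2) (Fin 2) ℂ) :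
    Matrix (Fin n → Fin 2) (Fin n → Fin 2) ℂ :=
  Matrix.of fun f g => ∏ i, M i (f i) (g i)

/-- Pauli matrix `σ_x`. -/
def pauliX : Matrix (Fin 2) (Fin 2) ℂ := !![0, 1; 1, 0]

/-- Pauli matrix `σ_y`. -/
def pauliY : Matrix (Fin 2) (Fin 2) ℂ := !![0, -Complex.I; Complex.I, 0]

/-- Pauli matrix `σ_z`. -/
def pauliZ : Matrix (Fin 2) (Fin 2) ℂ := !![1, 0; 0, -1]

/-- Standard basis vector `|x⟩` of `n` qubits. -/
def ket {n : ℕ} (x : Fin n → Fin 2) : (Fin n → Fin 2) → ℂ :=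
  fun f => if f = x then 1 else 0

/-- The four-qubit state
`((a+d)/2)(|0000⟩+|1111⟩) + ((a-d)/2)(|0011⟩+|1100⟩) + ((b+c)/2)(|0101⟩+|1010⟩)
 + ((b-c)/2)(|0110⟩+|1001⟩)`. -/
noncomputable def Psi4 (a b c d : ℂ) : (Fin 4 → Fin 2) → ℂ :=
  ((a + d) / 2) • (ket ![0, 0, 0, 0] + ket ![1, 1, 1, 1]) +
  ((a - d) / 2) • (ket ![0, 0, 1, 1] + ket ![1, 1, 0, 0]) +
  ((b + c) / 2) • (ket ![0, 1, 0, 1] + ket ![1, 0, 1, 0]) +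
  ((b - c) / 2) • (ket ![0, 1, 1, 0] + ket ![1, 0, 0, 1])

/-- The single-qubit reduced density matrix of party `i` of the pure state `v`. -/
noncomputable def rho {n : ℕ} (v : (Fin n → Fin 2) → ℂ) (i : Fin n) :
    Matrix (Fin 2) (Fin 2) ℂ :=
  Matrix.of fun x y => ∑ f : Fin n → Fin 2,
    if f i = y then v (Function.update f i x) * star (v f) else 0

lemma sum_succ_aux {M : Type*} [AddCommMonoid M] {n : ℕ} (g : (Fin (n + 1) → Fin 2) → M) :
    ∑ f : Fin (n + 1) → Fin 2, g f =
      ∑ x : Fin 2, ∑ f : Fin n → Fin 2, g (Fin.cons x f) := by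
  rw [← (Fin.consEquiv fun _ => Fin 2).sum_comp, Fintype.sum_prod_type]; rfl

lemma sum_fin4_aux {M : Type*} [AddCommMonoid M] (g : (Fin 4 → Fin 2) → M) :
    ∑ f : Fin 4 → Fin 2, g f =
      ∑ i : Fin 2, ∑ j : Fin 2, ∑ k : Fin 2, ∑ l : Fin 2, g ![i, j, k, l] := by
  simp only [sum_succ_aux]
  refine Finset.sum_congr rfl fun i _ => Finset.sum_congr rfl fun j _ =>
    Finset.sum_congr rfl fun k _ => Finset.sum_congr rfl fun l _ => ?_
  rw [Fintype.sum_unique]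
  congr 1

lemma upd0_aux (x i j k l : Fin 2) :
    Function.update ![i, j, k, l] (0 : Fin 4) x = ![x, j, k, l] := by
  ext m; fin_cases m <;> simp [Function.update]
lemma upd1_aux (x i j k l : Fin 2) :
    Function.update ![i, j, k, l] (1 : Fin 4) x = ![i, x, k, l] := by
  ext m; fin_cases m <;> simp [Function.update]
lemma upd2_aux (x i j k l : Fin 2) :
    Function.update ![i, j, k, l] (2 : Fin 4) x = ![i, j, x, l] := by
  ext m; fin_cases m <;> simp [Function.update]
lemma upd3_aux (x i j k l : Fin 2) :
    Function.update ![i, j, k, l] (3 : Fin 4) x = ![i, j, k, x] := by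
  ext m; fin_cases m <;> simp [Function.update]

lemma ket_eval_aux (x : Fin 4 → Fin 2) (i j k l : Fin 2) :
    ket x ![i, j, k, l] =
      if i = x 0 ∧ j = x 1 ∧ k = x 2 ∧ l = x 3 then 1 else 0 := by
  simp only [ket, funext_iff, Fin.forall_fin_succ]
  simp [Matrix.cons_val_zero, Matrix.cons_val_succ, and_assoc]

lemma rho_Psi4_eq0 (a b c d : ℂ) :
    rho (Psi4 a b c d) 0 = ((star (a+d) * (a+d) + star (a-d) * (a-d)
        + star (b+c) * (b+c) + star (b-c) * (b-c)) / 4) • (1 : Matrix (Fin 2) (Fin 2) ℂ) := by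
  ext x y
  simp only [rho, Matrix.of_apply]
  rw [sum_fin4_aux]
  fin_cases x <;> fin_cases y <;>
    simp only [Fin.sum_univ_two, upd0_aux, Psi4,
      Pi.add_apply, Pi.smul_apply, ket_eval_aux, smul_eq_mul,
      Matrix.cons_val_zero, Matrix.cons_val_one, Matrix.head_cons,
      Matrix.cons_val_two, Matrix.tail_cons, Matrix.cons_val_three, Matrix.head_fin_const]
    <;> norm_num [Matrix.one_apply] <;> ring

lemma rho_Psi4_eq1 (a b c d : ℂ) :
    rho (Psi4 a b c d) 1 = ((star (a+d) * (a+d) + star (a-d) * (a-d)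
        + star (b+c) * (b+c) + star (b-c) * (b-c)) / 4) • (1 : Matrix (Fin 2) (Fin 2) ℂ) := by
  ext x y
  simp only [rho, Matrix.of_apply]
  rw [sum_fin4_aux]
  fin_cases x <;> fin_cases y <;>
    simp only [Fin.sum_univ_two, upd1_aux, Psi4,
      Pi.add_apply, Pi.smul_apply, ket_eval_aux, smul_eq_mul,
      Matrix.cons_val_zero, Matrix.cons_val_one, Matrix.head_cons,
      Matrix.cons_val_two, Matrix.tail_cons, Matrix.cons_val_three, Matrix.head_fin_const]
    <;> norm_num [Matrix.one_apply] <;> ring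

lemma rho_Psi4_eq2 (a b c d : ℂ) :
    rho (Psi4 a b c d) 2 = ((star (a+d) * (a+d) + star (a-d) * (a-d)
        + star (b+c) * (b+c) + star (b-c) * (b-c)) / 4) • (1 : Matrix (Fin 2) (Fin 2) ℂ) := by
  ext x y
  simp only [rho, Matrix.of_apply]
  rw [sum_fin4_aux]
  fin_cases x <;> fin_cases y <;>
    simp only [Fin.sum_univ_two, upd2_aux, Psi4,
      Pi.add_apply, Pi.smul_apply, ket_eval_aux, smul_eq_mul,
      Matrix.cons_val_zero, Matrix.cons_val_one, Matrix.head_cons,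
      Matrix.cons_val_two, Matrix.tail_cons, Matrix.cons_val_three, Matrix.head_fin_const]
    <;> norm_num [Matrix.one_apply] <;> ring

lemma rho_Psi4_eq3 (a b c d : ℂ) :
    rho (Psi4 a b c d) 3 = ((star (a+d) * (a+d) + star (a-d) * (a-d)
        + star (b+c) * (b+c) + star (b-c) * (b-c)) / 4) • (1 : Matrix (Fin 2) (Fin 2) ℂ) := by
  ext x y
  simp only [rho, Matrix.of_apply]
  rw [sum_fin4_aux]
  fin_cases x <;> fin_cases y <;>
    simp only [Fin.sum_univ_two, upd3_aux, Psi4,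
      Pi.add_apply, Pi.smul_apply, ket_eval_aux, smul_eq_mul,
      Matrix.cons_val_zero, Matrix.cons_val_one, Matrix.head_cons,
      Matrix.cons_val_two, Matrix.tail_cons, Matrix.cons_val_three, Matrix.head_fin_const]
    <;> norm_num [Matrix.one_apply] <;> ring

lemma rho_Psi4_eq (a b c d : ℂ) (i : Fin 4) :
    rho (Psi4 a b c d) i = ((star (a+d) * (a+d) + star (a-d) * (a-d)
        + star (b+c) * (b+c) + star (b-c) * (b-c)) / 4) • (1 : Matrix (Fin 2) (Fin 2) ℂ) := by
  fin_cases i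
  · exact rho_Psi4_eq0 a b c d
  · exact rho_Psi4_eq1 a b c d
  · exact rho_Psi4_eq2 a b c d
  · exact rho_Psi4_eq3 a b c d

/-- Under the genericity conditions `b²≠c²`, `c²≠d²`, `b²≠d²` and
`a² ∉ {b², c², d²}`, the four-qubit state `Psi4 a b c d` is fully entangled:
every single-qubit reduced density matrix has rank 2. -/
theorem Psi4_fully_entangled (a b c d : ℂ)
    (hbc : b ^ 2 ≠ c ^ 2) (hcd : c ^ 2 ≠ d ^ 2) (hbd : b ^ 2 ≠ d ^ 2)
    (hab : a ^ 2 ≠ b ^ 2) (hac : a ^ 2 ≠ c ^ 2) (had : a ^ 2 ≠ d ^ 2) :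
    ∀ i : Fin 4, (rho (Psi4 a b c d) i).rank = 2 := by
  intro i
  rw [rho_Psi4_eq]
  set s : ℂ := (star (a+d) * (a+d) + star (a-d) * (a-d)
        + star (b+c) * (b+c) + star (b-c) * (b-c)) / 4 with hs_def
  have hbc0 : b + c ≠ 0 ∨ b - c ≠ 0 := by
    by_contra h
    push_neg at h
    obtain ⟨h1, h2⟩ := h
    apply hbc
    have hb : b = c := by linear_combination h2
    rw [hb]
  have hsum : s = (((Complex.normSq (a+d) + Complex.normSq (a-d)
      + Complex.normSq (b+c) + Complex.normSq (b-c) : ℝ)) : ℂ) / 4 := by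
    rw [hs_def]
    push_cast
    simp only [Complex.normSq_eq_conj_mul_self, Complex.star_def]
  have hpos : (0:ℝ) < Complex.normSq (a+d) + Complex.normSq (a-d)
      + Complex.normSq (b+c) + Complex.normSq (b-c) := by
    have h1 : 0 < Complex.normSq (b+c) + Complex.normSq (b-c) := by
      rcases hbc0 with h | h
      · have := Complex.normSq_pos.2 h
        have := Complex.normSq_nonneg (b - c)
        linarith
      · have := Complex.normSq_pos.2 h
        have := Complex.normSq_nonneg (b + c)
        linarith
    have := Complex.normSq_nonneg (a + d)
    have := Complex.normSq_nonneg (a - d)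
    linarith
  have hs : s ≠ 0 := by
    rw [hsum]
    exact div_ne_zero (Complex.ofReal_ne_zero.2 hpos.ne') (by norm_num)
  have hunit : IsUnit (s • (1 : Matrix (Fin 2) (Fin 2) ℂ)) := by
    rw [Matrix.isUnit_iff_isUnit_det, Matrix.det_smul, Matrix.det_one, mul_one]
    exact isUnit_iff_ne_zero.2 (pow_ne_zero _ hs)
  rw [Matrix.rank_of_isUnit _ hunit]
  simp
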